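/- If X ⊆ A^ℤ is an infinite transitive subshift, then the cellular automaton F_X on the star-studded subshift X* has all directions sensitive; that is, for all coprime integers p, q with q > 0, the map σ^p ∘ F_X^q is sensitive (has no blocking word). -/

import Mathlib

/-!
`starCA` keeps every star in place and moves the letters of the underlying point of `X` one step
to the left, jumping over stars. For `p ≠ 0`, the cell `pp` of `σ^p ∘ F^q` at time `m` is the cell
`pp + p m` of `F^(q m)`, which for large `m` lies outside the blocking word; a star inserted there
freezes that cell, so no word blocks. For `p = 0`, hence `q = 1`, a blocking word (or, for radius
`0`, the local rule itself) forces all points of `X` starting with some word `u` to agree after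
`u`. By transitivity this unique follower contains every word of `X`, at a position below a period
of it, so `X` has boundedly many words of each length and is finite.
-/

namespace Paper

variable {A B C : Type*}

def shiftMap (x : ℤ → A) : ℤ → A := fun i => x (i + 1)

def shiftInvMap (x : ℤ → A) : ℤ → A := fun i => x (i - 1)

/-- A subshift: nonempty, shift-invariant (both directions), and closed
(expressed combinatorially: any configuration all of whose central patterns
are approximated by members is a member). -/
def IsSubshift (X : Set (ℤ → A)) : Prop :=
  X.Nonempty ∧ (∀ x ∈ X, shiftMap x ∈ X) ∧ (∀ x ∈ X, shiftInvMap x ∈ X) ∧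
  ∀ x : ℤ → A, (∀ n : ℕ, ∃ y ∈ X, ∀ i : ℤ, |i| ≤ (n : ℤ) → y i = x i) → x ∈ X

/-- The word `x[i, i+k-1]`. -/
def cfgWord (x : ℤ → A) (i : ℤ) (k : ℕ) : List A :=
  List.ofFn (fun t : Fin k => x (i + ((t : ℕ) : ℤ)))

/-- The language of a set of configurations. -/
def lang (X : Set (ℤ → A)) : Set (List A) := {w | ∃ x ∈ X, ∃ i : ℤ, cfgWord x i w.length = w}

def TransitiveShift (X : Set (ℤ → A)) : Prop :=
  ∀ u ∈ lang X, ∀ v ∈ lang X, ∃ w : List A, u ++ w ++ v ∈ lang X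

/-- Left ray of a configuration: `leftRay x n = x (-1-n)`. -/
def leftRay (x : ℤ → A) : ℕ → A := fun n => x (-1 - (n : ℤ))

def rightRay (x : ℤ → A) : ℕ → A := fun n => x (n : ℤ)

def LeftRays (X : Set (ℤ → A)) : Set (ℕ → A) := leftRay '' X

def RightRays (X : Set (ℤ → A)) : Set (ℕ → A) := rightRay '' X

/-- Glue a left ray and a right ray into a configuration. -/
def glue (l r : ℕ → A) : ℤ → A := fun i => if 0 ≤ i then r i.toNat else l (-1 - i).toNat

/-- Follower set of a left-infinite sequence. -/
def foll (X : Set (ℤ → A)) (l : ℕ → A) : Set (ℕ → A) := {r | glue l r ∈ X}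

def wordThen (w : List A) (r : ℕ → A) : ℕ → A :=
  fun n => if h : n < w.length then w.get ⟨n, h⟩ else r (n - w.length)

/-- Follower set of a word. -/
def follW (X : Set (ℤ → A)) (w : List A) : Set (ℕ → A) := {r | wordThen w r ∈ RightRays X}

def occursInLeft (l : ℕ → A) (w : List A) : Prop :=
  ∃ j : ℕ, ∀ k : Fin w.length, l (j + (w.length - 1 - (k : ℕ))) = w.get k

/-- The language of a left-infinite sequence. -/
def langL (l : ℕ → A) : Set (List A) := {w | occursInLeft l w}

/-- The left ray `l` ends with the word `w`. -/
def raySuffix (l : ℕ → A) (w : List A) : Prop :=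
  ∀ k : Fin w.length, l (w.length - 1 - (k : ℕ)) = w.get k

def HalfSyncWord (X : Set (ℤ → A)) (w : List A) : Prop :=
  w ∈ lang X ∧ ∃ l ∈ LeftRays X, raySuffix l w ∧ langL l = lang X ∧ foll X l = follW X w

def HalfSynchronized (X : Set (ℤ → A)) : Prop := TransitiveShift X ∧ ∃ w, HalfSyncWord X w

def SyncWord (X : Set (ℤ → A)) (w : List A) : Prop :=
  w ∈ lang X ∧ ∀ l ∈ LeftRays X, raySuffix l w → foll X l = follW X w

def Synchronized (X : Set (ℤ → A)) : Prop := TransitiveShift X ∧ ∃ w, SyncWord X w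

/-- Product of two subshifts, over the product alphabet. -/
def prodShift (Y : Set (ℤ → B)) (Z : Set (ℤ → C)) : Set (ℤ → B × C) :=
  {x | (fun i => (x i).1) ∈ Y ∧ (fun i => (x i).2) ∈ Z}

/-- Identification of a pair of sets of right rays with a set of right rays
over the product alphabet. -/
def prodRaySet (S : Set (ℕ → B)) (T : Set (ℕ → C)) : Set (ℕ → B × C) :=
  {r | (fun n => (r n).1) ∈ S ∧ (fun n => (r n).2) ∈ T}

/-- Extend a left ray by one more symbol on the right. -/
def extendRay (l : ℕ → A) (a : A) : ℕ → A := fun n => if n = 0 then a else l (n - 1)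

/-- Edge of the Krieger graph from `u` to `v` labeled `a`. -/
def KEdge (X : Set (ℤ → A)) (u : Set (ℕ → A)) (a : A) (v : Set (ℕ → A)) : Prop :=
  ∃ l ∈ LeftRays X, extendRay l a ∈ LeftRays X ∧ u = foll X l ∧ v = foll X (extendRay l a)

def KStep (X : Set (ℤ → A)) (u v : Set (ℕ → A)) : Prop := ∃ a, KEdge X u a v

/-- Existence of a finite path in the Krieger graph. -/
def KReach (X : Set (ℤ → A)) : Set (ℕ → A) → Set (ℕ → A) → Prop :=
  Relation.ReflTransGen (KStep X)

def KVertex (X : Set (ℤ → A)) (v : Set (ℕ → A)) : Prop := ∃ l ∈ LeftRays X, v = foll X l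

/-- A subshift is sofic iff it has finitely many follower sets. -/
def Sofic (X : Set (ℤ → A)) : Prop := {v : Set (ℕ → A) | KVertex X v}.Finite

/-- Vertex of the Fischer graph (w.r.t. half-synchronizing word `w`): a vertex of the
Krieger graph in the maximal strongly connected subgraph containing `foll w`. -/
def FVertex (X : Set (ℤ → A)) (w : List A) (v : Set (ℕ → A)) : Prop :=
  KVertex X v ∧ KReach X (follW X w) v ∧ KReach X v (follW X w)

/-- Directed (multi)graph with vertex type `V` and edge type `E`. -/
structure DiGraph (V : Type*) (E : Type*) where
  ini : E → V
  ter : E → V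

variable {V E V' E' : Type*}

/-- Bi-infinite path on a graph. -/
def BiPath (G : DiGraph V E) (x : ℤ → E) : Prop := ∀ i : ℤ, G.ter (x i) = G.ini (x (i + 1))

/-- `p` is a finite path of `m+1` edges. -/
def FinPath (G : DiGraph V E) (m : ℕ) (p : Fin (m + 1) → E) : Prop :=
  ∀ k : Fin m, G.ter (p k.castSucc) = G.ini (p k.succ)

/-- The subpath `x[i, i+n]` of a bi-infinite path is a shortest path between its endpoints. -/
def GeodesicSeg (G : DiGraph V E) (x : ℤ → E) (i : ℤ) (n : ℕ) : Prop :=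
  ∀ (m : ℕ) (p : Fin (m + 1) → E), FinPath G m p →
    G.ini (p 0) = G.ini (x i) → G.ter (p (Fin.last m)) = G.ter (x (i + (n : ℤ))) → n ≤ m

def EvGeodesic (G : DiGraph V E) (x : ℤ → E) : Prop :=
  ∃ i₀ : ℤ, ∀ i : ℤ, i₀ ≤ i → ∀ n : ℕ, GeodesicSeg G x i n

/-- Strictly proximal pair of bi-infinite paths. -/
def StrictProxPair (x y : ℤ → E) : Prop :=
  (∀ n : ℕ, ∃ i : ℕ, ∀ k : ℕ, k ≤ n → x ((i : ℤ) + (k : ℤ)) = y ((i : ℤ) + (k : ℤ))) ∧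
  ∀ N : ℕ, ∃ i : ℕ, N ≤ i ∧ x ((i : ℕ) : ℤ) ≠ y ((i : ℕ) : ℤ)

def HasEvGeoProxPair (G : DiGraph V E) : Prop :=
  ∃ x y : ℤ → E, BiPath G x ∧ BiPath G y ∧ EvGeodesic G x ∧ EvGeodesic G y ∧ StrictProxPair x y

/-- Edges of the Fischer graph: Krieger edges between Fischer vertices. -/
def FischerE (X : Set (ℤ → A)) (w : List A) : Type _ :=
  {t : Set (ℕ → A) × A × Set (ℕ → A) //
    FVertex X w t.1 ∧ FVertex X w t.2.2 ∧ KEdge X t.1 t.2.1 t.2.2}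

def FischerGraph (X : Set (ℤ → A)) (w : List A) : DiGraph (Set (ℕ → A)) (FischerE X w) :=
  ⟨fun e => e.1.1, fun e => e.1.2.2⟩

def SlidingBlockCode (X : Set (ℤ → A)) (F : (ℤ → A) → (ℤ → B)) : Prop :=
  ∃ (r : ℕ) (f : (Fin (2 * r + 1) → A) → B),
    ∀ x ∈ X, ∀ i : ℤ, F x i = f (fun k => x (i + ((k : ℕ) : ℤ) - (r : ℤ)))

def ShiftConjugate (X : Set (ℤ → A)) (Y : Set (ℤ → B)) : Prop :=
  ∃ F : (ℤ → A) → (ℤ → B), SlidingBlockCode X F ∧ Set.InjOn F X ∧ F '' X = Y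

def DirectPrime (X : Set (ℤ → A)) : Prop :=
  ∀ (B C : Type) (_ : Finite B) (_ : Finite C) (Y : Set (ℤ → B)) (Z : Set (ℤ → C)),
    IsSubshift Y → IsSubshift Z → ShiftConjugate X (prodShift Y Z) →
    (∃ y, Y = {y}) ∨ (∃ z, Z = {z})

/-- The star-studded version of a subshift: configurations of `X` with `*` (here `none`)
interleaved so that no two consecutive `*` occur. -/
def starShift (X : Set (ℤ → A)) : Set (ℤ → Option A) :=
  {x | (∀ i : ℤ, ¬ (x i = none ∧ x (i + 1) = none)) ∧
       ∀ (i : ℤ) (k : ℕ), (cfgWord x i k).reduceOption ∈ lang X}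

/-- The reversible CA `F_X` on the star-studded subshift. -/
def starCA (x : ℤ → Option A) : ℤ → Option A := fun i =>
  match x i, x (i + 1) with
  | none, _ => none
  | some _, none => x (i + 2)
  | some _, some b => some b

/-- `G` is a radius-`r` CA on `X`. -/
def IsRadiusCA (X : Set (ℤ → A)) (G : (ℤ → A) → (ℤ → A)) (r : ℕ) : Prop :=
  ∃ f : (Fin (2 * r + 1) → A) → A,
    ∀ x ∈ X, ∀ i : ℤ, G x i = f (fun k => x (i + ((k : ℕ) : ℤ) - (r : ℤ)))

/-- `w` is a blocking word for the radius-`r` CA `G` on `X`. -/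
def BlockingWord (X : Set (ℤ → A)) (G : (ℤ → A) → (ℤ → A)) (r : ℕ) (w : List A) : Prop :=
  ∃ e pp : ℕ, e ≤ w.length ∧ r + 1 ≤ e ∧ pp + e ≤ w.length ∧
    ∀ x ∈ X, ∀ y ∈ X, cfgWord x 0 w.length = w → cfgWord y 0 w.length = w →
      ∀ (m k : ℕ), k < e →
        (G^[m] x) ((pp : ℤ) + (k : ℤ)) = (G^[m] y) ((pp : ℤ) + (k : ℤ))

/-- A CA on a transitive subshift is sensitive iff it has no blocking word. -/
def SensitiveCA (X : Set (ℤ → A)) (G : (ℤ → A) → (ℤ → A)) : Prop :=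
  ¬ ∃ (r : ℕ) (w : List A), IsRadiusCA X G r ∧ w ∈ lang X ∧ BlockingWord X G r w
section Words

lemma length_cfgWord (x : ℤ → A) (i : ℤ) (L : ℕ) : (cfgWord x i L).length = L :=
  List.length_ofFn

lemma cfgWord_eq_cfgWord_iff {x y : ℤ → A} {i j : ℤ} {L : ℕ} :
    cfgWord x i L = cfgWord y j L ↔ ∀ t < L, x (i + t) = y (j + t) := by
  simp [cfgWord, List.ofFn_inj, funext_iff, Fin.forall_iff]

lemma cfgWord_add (x : ℤ → A) (i : ℤ) (a b : ℕ) :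
    cfgWord x i (a + b) = cfgWord x i a ++ cfgWord x (i + a) b := by
  simp [cfgWord, List.ofFn_add, add_assoc]

lemma cfgWord_one (x : ℤ → A) (i : ℤ) : cfgWord x i 1 = [x i] := by
  simp [cfgWord]

lemma cfgWord_comp_add (x : ℤ → A) (c i : ℤ) (L : ℕ) :
    cfgWord (fun k => x (k + c)) i L = cfgWord x (i + c) L :=
  cfgWord_eq_cfgWord_iff.2 fun _ _ => by ring_nf

lemma eventually_cfgWord_ne {x y : ℤ → A} (hxy : x ≠ y) :
    ∀ᶠ N : ℕ in Filter.atTop, cfgWord x (-N) (2 * N + 1) ≠ cfgWord y (-N) (2 * N + 1) := by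
  obtain ⟨c, hc⟩ := Function.ne_iff.1 hxy
  filter_upwards [Filter.eventually_ge_atTop c.natAbs] with N hN h
  have := cfgWord_eq_cfgWord_iff.1 h (c + N).toNat (by omega)
  rw [show -(N : ℤ) + (c + N).toNat = c by omega] at this
  exact hc this

end Words

section Subshift

variable {X : Set (ℤ → A)}

lemma IsSubshift.comp_add_mem (hX : IsSubshift X) {x : ℤ → A} (hx : x ∈ X) (c : ℤ) :
    (fun k => x (k + c)) ∈ X := by
  induction c using Int.induction_on with
  | zero => simpa using hx
  | succ n ih =>
    convert hX.2.1 _ ih using 1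
    funext k
    simp only [shiftMap, add_assoc, add_comm (1 : ℤ)]
  | pred n ih =>
    convert hX.2.2.1 _ ih using 1
    funext k
    simp only [shiftInvMap]
    ring_nf

lemma IsSubshift.exists_mem_cfgWord_eq (hX : IsSubshift X) {v : List A} (hv : v ∈ lang X) :
    ∃ z ∈ X, cfgWord z 0 v.length = v := by
  obtain ⟨x, hx, i, hxv⟩ := hv
  exact ⟨_, hX.comp_add_mem hx i, by rwa [cfgWord_comp_add, zero_add]⟩

lemma exists_mem_cfgWord_eq_of_transitive (hX : IsSubshift X) (ht : TransitiveShift X)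
    {u v : List A} (hu : u ∈ lang X) (hv : v ∈ lang X) :
    ∃ z ∈ X, cfgWord z 0 u.length = u ∧ ∃ s : ℕ, cfgWord z (u.length + s) v.length = v := by
  obtain ⟨w, hw⟩ := ht u hu v hv
  obtain ⟨z, hz, hzw⟩ := hX.exists_mem_cfgWord_eq hw
  simp only [List.length_append, cfgWord_add, zero_add] at hzw
  obtain ⟨huw, hzv⟩ := List.append_inj hzw (by simp [length_cfgWord])
  obtain ⟨hzu, -⟩ := List.append_inj huw (by simp [length_cfgWord])
  exact ⟨z, hz, hzu, w.length, by simpa using hzv⟩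

/-- Finitely many distinct configurations are already told apart by one central window. -/
lemma finite_of_encard_words_le (K : ℕ)
    (h : ∀ L : ℕ, {v ∈ lang X | v.length = L}.encard ≤ K) : X.Finite := by
  by_contra hinf
  obtain ⟨T, hTX, hT⟩ := Set.Infinite.exists_subset_card_eq hinf (K + 1)
  have hsep : ∀ᶠ N : ℕ in Filter.atTop,
      Set.InjOn (fun x => cfgWord x (-N) (2 * N + 1)) (T : Set (ℤ → A)) := by
    simp only [Set.InjOn, Finset.mem_coe]
    rw [Filter.eventually_all_finset]
    refine fun x _ => ?_
    rw [Filter.eventually_all_finset]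
    intro y _
    rcases eq_or_ne x y with rfl | hxy
    · exact Filter.Eventually.of_forall fun _ _ => rfl
    · filter_upwards [eventually_cfgWord_ne hxy] with N hN h using absurd h hN
  obtain ⟨N, hN⟩ := hsep.exists
  have himage : (fun x => cfgWord x (-N) (2 * N + 1)) '' T ⊆
      {v ∈ lang X | v.length = 2 * N + 1} := by
    rintro _ ⟨x, hx, rfl⟩
    exact ⟨⟨x, hTX hx, -N, by rw [length_cfgWord]⟩, length_cfgWord _ _ _⟩
  have := (Set.encard_le_encard himage).trans (h _)
  rw [hN.encard_image, Set.encard_coe_eq_coe_finsetCard, hT] at this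
  norm_cast at this
  omega

end Subshift

section Follower

variable {X : Set (ℤ → A)}

/-- The follower set of `u` is a singleton. -/
def HasUniqueFollower (X : Set (ℤ → A)) (u : List A) : Prop :=
  ∀ z₁ ∈ X, ∀ z₂ ∈ X, cfgWord z₁ 0 u.length = u → cfgWord z₂ 0 u.length = u →
    ∀ n : ℕ, z₁ (u.length + n) = z₂ (u.length + n)

/-- By transitivity every word occurs after `u` in the unique follower `z` of `u`; since `u`
itself recurs in `z`, say at `D`, the follower is `D`-periodic, so there are at most `D` words
of each length. -/
lemma HasUniqueFollower.finite (hX : IsSubshift X) (ht : TransitiveShift X) {u : List A}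
    (hu : u ∈ lang X) (hu₀ : u ≠ []) (h : HasUniqueFollower X u) : X.Finite := by
  obtain ⟨z, hz, hzu⟩ := hX.exists_mem_cfgWord_eq hu
  have hocc : ∀ v ∈ lang X, ∃ s : ℕ, cfgWord z (u.length + s) v.length = v := by
    intro v hv
    obtain ⟨z₁, hz₁, hz₁u, s, hs⟩ := exists_mem_cfgWord_eq_of_transitive hX ht hu hv
    refine ⟨s, (cfgWord_eq_cfgWord_iff.2 fun t _ => ?_).trans hs⟩
    simpa [add_assoc] using h z hz z₁ hz₁ hzu hz₁u (s + t)
  obtain ⟨s₀, hs₀⟩ := hocc u hu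
  set D := u.length + s₀
  have hD : 0 < D := by have := List.length_pos_iff.2 hu₀; omega
  have hper : Function.Periodic (fun n : ℕ => z (u.length + n)) D := fun n => by
    have hzD : cfgWord (fun k => z (k + D)) 0 u.length = u := by
      rwa [cfgWord_comp_add, zero_add]
    simpa [add_assoc] using h _ (hX.comp_add_mem hz D) z hz hzD hzu n
  apply finite_of_encard_words_le D
  intro L
  calc {v ∈ lang X | v.length = L}.encard
      ≤ ((fun t : ℕ => cfgWord z (u.length + t) L) '' {t | t < D}).encard := by
        refine Set.encard_le_encard ?_
        rintro v ⟨hv, rfl⟩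
        obtain ⟨s, hs⟩ := hocc v hv
        refine ⟨s % D, Nat.mod_lt s hD, (cfgWord_eq_cfgWord_iff.2 fun t _ => ?_).trans hs⟩
        have := hper.nat_mul (s / D) (s % D + t)
        rw [Nat.cast_id, add_right_comm, mul_comm, Nat.mod_add_div] at this
        simpa [add_assoc] using this.symm
    _ ≤ {t | t < D}.encard := Set.encard_image_le _ _
    _ = D := Set.Nat.encard_range D

end Follower

section StarStudded

def NoDoubleStar (x : ℤ → Option A) : Prop := ∀ i : ℤ, ¬ (x i = none ∧ x (i + 1) = none)

/-- `x` is `z` with stars interleaved; `θ k` is the index in `z` of the first letter of `x` at or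
after position `k`. -/
def StarStudded (z : ℤ → A) (θ : ℤ → ℤ) (x : ℤ → Option A) : Prop :=
  ∀ k, (x k = none ∧ θ (k + 1) = θ k) ∨ (x k = some (z (θ k)) ∧ θ (k + 1) = θ k + 1)

variable {X : Set (ℤ → A)} {z : ℤ → A} {θ : ℤ → ℤ} {x : ℤ → Option A}

lemma starStudded_some (z : ℤ → A) : StarStudded z id (fun k => some (z k)) :=
  fun _ => Or.inr ⟨rfl, rfl⟩

lemma StarStudded.comp_add (hS : StarStudded z θ x) (c : ℤ) :
    StarStudded z (fun k => θ (k + c)) (fun k => x (k + c)) := fun k => by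
  simpa only [add_right_comm k 1 c] using hS (k + c)

lemma StarStudded.exists_reduceOption_cfgWord (hS : StarStudded z θ x) (i : ℤ) (L : ℕ) :
    ∃ n : ℕ, θ (i + L) = θ i + n ∧ (cfgWord x i L).reduceOption = cfgWord z (θ i) n := by
  induction L with
  | zero => exact ⟨0, by simp, by simp [cfgWord]⟩
  | succ L ih =>
    obtain ⟨n, hθ, hw⟩ := ih
    rw [cfgWord_add, cfgWord_one, List.reduceOption_append, hw, Nat.cast_succ, ← add_assoc]
    rcases hS (i + L) with ⟨hx, hθ'⟩ | ⟨hx, hθ'⟩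
    · exact ⟨n, by rw [hθ', hθ], by simp [hx]⟩
    · refine ⟨n + 1, by rw [hθ', hθ]; push_cast; ring, ?_⟩
      rw [hx, cfgWord_add, cfgWord_one, hθ]
      simp

lemma StarStudded.monotone (hS : StarStudded z θ x) : Monotone θ := fun i k hik => by
  obtain ⟨n, hn, -⟩ := hS.exists_reduceOption_cfgWord i (k - i).toNat
  rw [show i + (k - i).toNat = k by omega] at hn
  omega

lemma StarStudded.mem_starShift (hS : StarStudded z θ x) (hN : NoDoubleStar x) (hz : z ∈ X) :
    x ∈ starShift X := by
  refine ⟨hN, fun i L => ?_⟩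
  obtain ⟨n, -, h⟩ := hS.exists_reduceOption_cfgWord i L
  rw [h]
  exact ⟨z, hz, θ i, by rw [length_cfgWord]⟩

lemma NoDoubleStar.of_cfgWord_eq {y : ℤ → Option A} (hx : NoDoubleStar x) {i : ℤ} {L : ℕ}
    (hxy : cfgWord x i L = cfgWord y 0 L) (hy : ∀ k, k < 0 ∨ (L : ℤ) ≤ k → y k ≠ none) :
    NoDoubleStar y := by
  rintro k ⟨h₀, h₁⟩
  by_cases hk : k < 0 ∨ L ≤ k + 1
  · rcases hk with hk | hk
    exacts [hy k (.inl hk) h₀, hy (k + 1) (.inr hk) h₁]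
  · have e₀ := cfgWord_eq_cfgWord_iff.1 hxy k.toNat (by omega)
    have e₁ := cfgWord_eq_cfgWord_iff.1 hxy (k.toNat + 1) (by omega)
    rw [show (0 : ℤ) + k.toNat = k by omega] at e₀
    rw [show (0 : ℤ) + (k.toNat + 1 : ℕ) = k + 1 by omega] at e₁
    refine hx (i + k.toNat) ⟨e₀.trans h₀, ?_⟩
    rw [add_assoc, ← Nat.cast_add_one, e₁, h₁]

end StarStudded

section StarCA

variable {z : ℤ → A} {θ : ℤ → ℤ} {x : ℤ → Option A}

lemma starCA_eq_none_iff (hN : NoDoubleStar x) (i : ℤ) : starCA x i = none ↔ x i = none := by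
  have h2 := hN (i + 1)
  rw [add_assoc, one_add_one_eq_two] at h2
  unfold starCA
  rcases x i with _ | a <;> rcases hx : x (i + 1) with _ | b <;> simp_all

lemma noDoubleStar_starCA (hN : NoDoubleStar x) : NoDoubleStar (starCA x) := fun i h =>
  hN i (by simpa only [starCA_eq_none_iff hN] using h)

lemma NoDoubleStar.starCA_iterate (hN : NoDoubleStar x) (n : ℕ) :
    NoDoubleStar (starCA^[n] x) := by
  induction n with
  | zero => exact hN
  | succ n ih => simpa only [Function.iterate_succ_apply'] using noDoubleStar_starCA ih

lemma starCA_iterate_eq_none_iff (hN : NoDoubleStar x) (n : ℕ) (i : ℤ) :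
    starCA^[n] x i = none ↔ x i = none := by
  induction n with
  | zero => rfl
  | succ n ih => rw [Function.iterate_succ_apply', starCA_eq_none_iff (hN.starCA_iterate n), ih]

lemma starStudded_starCA (hS : StarStudded z θ x) (hN : NoDoubleStar x) :
    StarStudded (fun n => z (n + 1)) θ (starCA x) := fun k => by
  rcases hS k with ⟨hx, hθ⟩ | ⟨hx, hθ⟩
  · exact .inl ⟨(starCA_eq_none_iff hN k).2 hx, hθ⟩
  refine .inr ⟨?_, hθ⟩
  rcases hS (k + 1) with ⟨hx₁, hθ₁⟩ | ⟨hx₁, hθ₁⟩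
  · rcases hS (k + 1 + 1) with ⟨hx₂, -⟩ | ⟨hx₂, -⟩
    · exact absurd ⟨hx₁, hx₂⟩ (hN (k + 1))
    · rw [hθ₁, hθ, add_assoc, one_add_one_eq_two] at hx₂
      simp [starCA, hx, hx₁, hx₂]
  · rw [hθ] at hx₁
    simp [starCA, hx, hx₁]

lemma StarStudded.starCA_iterate (hS : StarStudded z θ x) (hN : NoDoubleStar x) (m : ℕ) :
    StarStudded (fun n => z (n + m)) θ (starCA^[m] x) := by
  induction m with
  | zero => simpa using hS
  | succ m ih =>
    rw [Function.iterate_succ_apply']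
    simpa [add_assoc, add_comm (1 : ℤ)] using starStudded_starCA ih (hN.starCA_iterate m)

lemma StarStudded.starCA_iterate_apply (hS : StarStudded z θ x) (hN : NoDoubleStar x) {k : ℤ}
    (hk : x k ≠ none) (m : ℕ) : starCA^[m] x k = some (z (θ k + m)) := by
  rcases hS.starCA_iterate hN m k with ⟨h, -⟩ | ⟨h, -⟩
  · exact absurd ((starCA_iterate_eq_none_iff hN m k).1 h) hk
  · exact h

lemma starCA_comm_translate (c : ℤ) :
    Function.Commute (starCA (A := A)) (fun x j => x (j + c)) := fun x => by
  funext i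
  simp only [starCA, add_right_comm _ _ c]

lemma iterate_translate_iterate {α : Type*} {F : (ℤ → α) → ℤ → α}
    (hF : ∀ c : ℤ, Function.Commute F (fun x j => x (j + c))) (p : ℤ) (q m : ℕ)
    (x : ℤ → α) (i : ℤ) :
    (fun x i => F^[q] x (i + p))^[m] x i = F^[q * m] x (i + p * m) := by
  induction m generalizing x i with
  | zero => simp
  | succ m ih =>
    rw [Function.iterate_succ_apply, ih, congrFun ((hF p).iterate_left (q * m) (F^[q] x)),
      ← Function.iterate_add_apply]
    simp only [Nat.cast_succ, mul_add, mul_one, add_assoc]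

end StarCA

section Placement

variable {z : ℤ → A} {θ : ℤ → ℤ} {x : ℤ → Option A}

def insertStar (t : ℤ) (x : ℤ → Option A) : ℤ → Option A :=
  fun k => if k < t then x k else if k = t then none else x (k - 1)

lemma starStudded_insertStar (hS : StarStudded z θ x) (t : ℤ) :
    StarStudded z (fun k => if k ≤ t then θ k else θ (k - 1)) (insertStar t x) := fun k => by
  rcases lt_trichotomy k t with hk | rfl | hk
  · simpa [insertStar, hk, hk.le, Int.add_one_le_iff.2 hk] using hS k
  · simp [insertStar]
  · simpa [insertStar, hk.ne', hk.not_gt, hk.not_ge, (hk.trans (lt_add_one k)).not_ge]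
      using hS (k - 1)

lemma noDoubleStar_insertStar (hN : NoDoubleStar x) {t : ℤ} (h₁ : x (t - 1) ≠ none)
    (h₂ : x t ≠ none) : NoDoubleStar (insertStar t x) := by
  rintro k ⟨h, h'⟩
  simp only [insertStar] at h h'
  rcases lt_trichotomy (k + 1) t with hk | hk | hk
  · simp only [hk, (lt_add_one k).trans hk, if_true] at h h'
    exact hN k ⟨h, h'⟩
  · rw [if_pos (by omega), show k = t - 1 by omega] at h
    exact h₁ h
  · rcases lt_trichotomy k t with hk' | rfl | hk'
    · omega
    · simp [h₂] at h'
    · rw [if_neg (by omega), if_neg (by omega)] at h h'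
      exact hN (k - 1) ⟨h, by simpa using h'⟩

/-- `placeWord w z` reads `w` on `[0, |w|)` and `z` flat elsewhere: the letters of `w` are the
`z (0), z (1), ...` and each star of `w` is an inserted star. -/
def placeWord : List (Option A) → (ℤ → A) → ℤ → Option A
  | [], z => fun k => some (z k)
  | none :: w, z => insertStar 0 (placeWord w z)
  | some _ :: w, z => fun k => placeWord w (fun n => z (n + 1)) (k - 1)

def placeIndex : List (Option A) → ℤ → ℤ
  | [] => id
  | none :: w => fun k => if k ≤ 0 then placeIndex w k else placeIndex w (k - 1)
  | some _ :: w => fun k => placeIndex w (k - 1) + 1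

lemma starStudded_placeWord (w : List (Option A)) (z : ℤ → A) :
    StarStudded z (placeIndex w) (placeWord w z) := by
  induction w generalizing z with
  | nil => exact starStudded_some z
  | cons c w ih =>
    rcases c with _ | a
    · exact starStudded_insertStar (ih z) 0
    · intro k
      simpa [placeWord, placeIndex, add_right_comm] using ih (fun n => z (n + 1)) (k - 1)

lemma placeWord_of_neg (w : List (Option A)) (z : ℤ → A) {k : ℤ} (hk : k < 0) :
    placeWord w z k = some (z k) := by
  induction w generalizing z k with
  | nil => rfl
  | cons c w ih =>
    rcases c with _ | a
    · simp [placeWord, insertStar, hk, ih z hk]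
    · simp [placeWord, ih _ (show k - 1 < 0 by omega)]

lemma placeIndex_of_nonpos (w : List (Option A)) {k : ℤ} (hk : k ≤ 0) : placeIndex w k = k := by
  induction w generalizing k with
  | nil => rfl
  | cons c w ih =>
    rcases c with _ | a
    · simp [placeIndex, hk, ih hk]
    · simp [placeIndex, ih (show k - 1 ≤ 0 by omega)]

lemma placeIndex_length (w : List (Option A)) :
    placeIndex w w.length = w.reduceOption.length := by
  induction w with
  | nil => rfl
  | cons c w ih =>
    rcases c with _ | a
    · simp [placeIndex, ih, show ¬ (w.length : ℤ) + 1 ≤ 0 by omega]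
    · simp [placeIndex, ih]

lemma placeWord_ne_none (w : List (Option A)) (z : ℤ → A) {k : ℤ}
    (hk : k < 0 ∨ (w.length : ℤ) ≤ k) : placeWord w z k ≠ none := by
  rcases hk with hk | hk
  · simp [placeWord_of_neg w z hk]
  induction w generalizing z k with
  | nil => simp [placeWord]
  | cons c w ih =>
    simp only [List.length_cons, Nat.cast_succ] at hk
    rcases c with _ | a
    · simpa [placeWord, insertStar, show ¬ k < 0 by omega, show k ≠ 0 by omega]
        using ih z (show (w.length : ℤ) ≤ k - 1 by omega)
    · exact ih _ (show (w.length : ℤ) ≤ k - 1 by omega)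

lemma cfgWord_placeWord {w : List (Option A)} {z : ℤ → A}
    (hz : cfgWord z 0 w.reduceOption.length = w.reduceOption) :
    cfgWord (placeWord w z) 0 w.length = w := by
  induction w generalizing z with
  | nil => rfl
  | cons c w ih =>
    rw [List.length_cons, add_comm, cfgWord_add, cfgWord_one, zero_add, List.singleton_append]
    rcases c with _ | a
    · rw [List.reduceOption_cons_of_none] at hz
      congr 1
      refine (cfgWord_eq_cfgWord_iff.2 fun t _ => ?_).trans (ih hz)
      simp [placeWord, insertStar, show ¬ (1 + t : ℤ) < 0 by omega, show (1 + t : ℤ) ≠ 0 by omega]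
    · rw [List.reduceOption_cons_of_some, List.length_cons, add_comm, cfgWord_add, cfgWord_one,
        zero_add, List.singleton_append] at hz
      obtain ⟨hz₀, hz'⟩ := List.cons_eq_cons.1 hz
      congr 1
      · simp [placeWord, placeWord_of_neg, hz₀]
      · refine (cfgWord_eq_cfgWord_iff.2 fun t _ => ?_).trans (ih (z := fun n => z (n + 1)) ?_)
        · simp [placeWord]
        · rwa [cfgWord_comp_add, zero_add]

end Placement

section Sensitivity

variable {X : Set (ℤ → A)} {w : List (Option A)} {z : ℤ → A}

lemma reduceOption_mem_lang (hw : w ∈ lang (starShift X)) : w.reduceOption ∈ lang X := by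
  obtain ⟨x, hx, i, hxw⟩ := hw
  rw [← hxw]
  exact hx.2 i _

lemma placeWord_mem_starShift (hw : w ∈ lang (starShift X)) (hz : z ∈ X)
    (hzw : cfgWord z 0 w.reduceOption.length = w.reduceOption) : placeWord w z ∈ starShift X := by
  obtain ⟨x, hx, i, hxw⟩ := hw
  refine (starStudded_placeWord w z).mem_starShift ?_ hz
  exact NoDoubleStar.of_cfgWord_eq hx.1 (by rw [hxw, cfgWord_placeWord hzw])
    fun k hk => placeWord_ne_none w z hk

lemma exists_mem_starShift_eq_none (hw : w ∈ lang (starShift X)) (hz : z ∈ X)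
    (hzw : cfgWord z 0 w.reduceOption.length = w.reduceOption) {t : ℤ}
    (ht : t < -1 ∨ (w.length : ℤ) < t) :
    ∃ y ∈ starShift X, cfgWord y 0 w.length = w ∧ y t = none := by
  set x := placeWord w z with hx
  have hS := starStudded_placeWord w z
  have hN : NoDoubleStar x := (placeWord_mem_starShift hw hz hzw).1
  have hne : ∀ k, k < 0 ∨ (w.length : ℤ) ≤ k → x k ≠ none := fun k hk => placeWord_ne_none w z hk
  rcases ht with ht | ht
  · refine ⟨insertStar t (fun k => x (k + 1)), (starStudded_insertStar (hS.comp_add 1) t).mem_starShift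
      (noDoubleStar_insertStar (fun k => hN (k + 1)) (by simpa using hne t (.inl (by omega)))
        (hne (t + 1) (.inl (by omega)))) hz,
      (cfgWord_eq_cfgWord_iff.2 fun k _ => ?_).trans (cfgWord_placeWord hzw), by simp [insertStar]⟩
    simp [insertStar, hx, show ¬ (k : ℤ) < t by omega, show (k : ℤ) ≠ t by omega]
  · refine ⟨insertStar t x, (starStudded_insertStar hS t).mem_starShift
      (noDoubleStar_insertStar hN (hne (t - 1) (.inr (by omega))) (hne t (.inr (by omega)))) hz,
      (cfgWord_eq_cfgWord_iff.2 fun k _ => ?_).trans (cfgWord_placeWord hzw), by simp [insertStar]⟩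
    simp [insertStar, hx, show (k : ℤ) < t by omega]

/-- For `p ≠ 0` the cell `pp` looks, at time `m`, at the original cell `pp + p m`, which lies
outside the window for `m` large; a star inserted there freezes it, so it cannot be blocked. -/
lemma not_blockingWord_of_ne_zero (hX : IsSubshift X) (hw : w ∈ lang (starShift X)) {p : ℤ}
    (hp : p ≠ 0) (q r : ℕ) : ¬ BlockingWord (starShift X) (fun x i => starCA^[q] x (i + p)) r w := by
  rintro ⟨e, pp, -, hre, hpe, hblock⟩
  obtain ⟨z, hz, hzw⟩ := hX.exists_mem_cfgWord_eq (reduceOption_mem_lang hw)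
  have hx := placeWord_mem_starShift hw hz hzw
  set m := w.length + 2
  have hm : (m : ℤ) = w.length + 2 := by simp [m]
  have ht : (pp : ℤ) + p * m < -1 ∨ (w.length : ℤ) < pp + p * m := by
    rcases hp.lt_or_gt with hp | hp
    · left; nlinarith
    · right; nlinarith
  obtain ⟨y, hy, hyw, hyt⟩ := exists_mem_starShift_eq_none hw hz hzw ht
  have h := hblock _ hx y hy (cfgWord_placeWord hzw) hyw m 0 (by omega)
  rw [iterate_translate_iterate starCA_comm_translate,
    iterate_translate_iterate starCA_comm_translate, Nat.cast_zero, add_zero] at h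
  refine placeWord_ne_none w z (ht.imp (by omega) le_of_lt) ?_
  exact (starCA_iterate_eq_none_iff hx.1 _ _).1
    (h.trans ((starCA_iterate_eq_none_iff hy.1 _ _).2 hyt))

/-- On star-free points `starCA` is the shift, which a radius-`0` rule can only realise if each
letter of `X` determines the next one. -/
lemma hasUniqueFollower_of_isRadiusCA_zero (hrad : IsRadiusCA (starShift X) starCA 0) (a : A) :
    HasUniqueFollower X [a] := by
  obtain ⟨f, hf⟩ := hrad
  have hnext : ∀ z₁ ∈ X, ∀ i, some (z₁ (i + 1)) = f (fun _ => some (z₁ i)) := by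
    intro z₁ hz₁ i
    have := hf _ ((starStudded_some z₁).mem_starShift (fun _ h => by simp at h) hz₁) i
    simpa [starCA, Fin.fin_one_eq_zero] using this
  have hagree : ∀ z₁ ∈ X, ∀ z₂ ∈ X, z₁ 0 = z₂ 0 → ∀ n : ℕ, z₁ n = z₂ n := by
    intro z₁ h₁ z₂ h₂ h₀ n
    induction n with
    | zero => exact h₀
    | succ n ih =>
      exact Option.some_injective _ (by rw [Nat.cast_succ, hnext z₁ h₁, hnext z₂ h₂, ih])
  intro z₁ h₁ z₂ h₂ hz₁ hz₂ n
  simp [cfgWord] at hz₁ hz₂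
  exact_mod_cast hagree z₁ h₁ z₂ h₂ (hz₁.trans hz₂.symm) (1 + n)

/-- Some cell `j` of the window carries a letter, which `starCA` replaces at each step by the next
letter of the underlying point of `X`; blocking forces all points starting with the letters of
`w` to agree from that letter on. -/
lemma hasUniqueFollower_of_blockingWord (hX : IsSubshift X) (hw : w ∈ lang (starShift X))
    {r : ℕ} (hblock : BlockingWord (starShift X) starCA (r + 1) w) :
    HasUniqueFollower X w.reduceOption ∧ w.reduceOption ≠ [] := by
  obtain ⟨e, pp, -, hre, hpe, hblock⟩ := hblock
  set u := w.reduceOption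
  obtain ⟨z, hz, hzu⟩ := hX.exists_mem_cfgWord_eq (reduceOption_mem_lang hw)
  set x := placeWord w z
  have hx := placeWord_mem_starShift hw hz hzu
  obtain ⟨j, hj, hje, hxj⟩ : ∃ j : ℕ, pp ≤ j ∧ j < pp + e ∧ x j ≠ none := by
    by_contra! h
    exact hx.1 pp ⟨h pp le_rfl (by omega), by exact_mod_cast h (pp + 1) (by omega) (by omega)⟩
  set θ := placeIndex w
  have hS := starStudded_placeWord w z
  have hθ₀ : 0 ≤ θ j := placeIndex_of_nonpos w le_rfl ▸ hS.monotone (by omega : (0 : ℤ) ≤ j)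
  have hθ : θ j + 1 ≤ u.length := by
    have hθ₁ : θ (j + 1) = θ j + 1 := by
      rcases hS j with ⟨h, -⟩ | ⟨-, h⟩
      exacts [absurd h hxj, h]
    rw [← hθ₁, ← placeIndex_length]
    exact hS.monotone (by omega)
  have hfollow : ∀ z₁ ∈ X, cfgWord z₁ 0 u.length = u → ∀ m : ℕ,
      z₁ (θ j + m) = z (θ j + m) := by
    intro z₁ hz₁ hz₁u m
    have hx₁ := placeWord_mem_starShift hw hz₁ hz₁u
    have hwin : placeWord w z₁ j = x j := by
      simpa using cfgWord_eq_cfgWord_iff.1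
        ((cfgWord_placeWord hz₁u).trans (cfgWord_placeWord hzu).symm) j (by omega)
    have h := hblock _ hx₁ x hx (cfgWord_placeWord hz₁u) (cfgWord_placeWord hzu) m (j - pp)
      (by omega)
    rw [show (pp : ℤ) + (j - pp : ℕ) = j by omega,
      (starStudded_placeWord w z₁).starCA_iterate_apply hx₁.1 (hwin ▸ hxj) m,
      hS.starCA_iterate_apply hx.1 hxj m] at h
    exact Option.some_injective _ h
  refine ⟨fun z₁ h₁ z₂ h₂ hz₁ hz₂ n => ?_, fun hu => ?_⟩
  · rw [show (u.length : ℤ) + n = θ j + (u.length - θ j + n : ℤ).toNat by omega,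
      hfollow z₁ h₁ hz₁, hfollow z₂ h₂ hz₂]
  · simp only [u, hu, List.length_nil] at hθ
    omega

end Sensitivity

theorem stmt17_general (X : Set (ℤ → A)) (hX : IsSubshift X) (hinf : X.Infinite)
    (ht : TransitiveShift X) (p : ℤ) (q : ℕ)
    (hcop : Int.gcd p (q : ℤ) = 1) :
    SensitiveCA (starShift X) (fun x i => (starCA^[q] x) (i + p)) := by
  rintro ⟨r, w, hrad, hw, hblock⟩
  rcases eq_or_ne p 0 with rfl | hp
  · obtain rfl : q = 1 := by simpa using hcop
    simp only [Function.iterate_one, add_zero] at hrad hblock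
    rcases r with _ | r
    · obtain ⟨z, hz⟩ := hinf.nonempty
      exact hinf ((hasUniqueFollower_of_isRadiusCA_zero hrad (z 0)).finite hX ht
        ⟨z, hz, 0, by simp [cfgWord]⟩ (List.cons_ne_nil _ _))
    · obtain ⟨hu, hu₀⟩ := hasUniqueFollower_of_blockingWord hX hw hblock
      exact hinf (hu.finite hX ht (reduceOption_mem_lang hw) hu₀)
  · exact not_blockingWord_of_ne_zero hX hw hp q r hblock

theorem stmt17 [Finite A] (X : Set (ℤ → A)) (hX : IsSubshift X) (hinf : X.Infinite)
    (ht : TransitiveShift X) (p : ℤ) (q : ℕ) (hq : 0 < q)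
    (hcop : Int.gcd p (q : ℤ) = 1) :
    SensitiveCA (starShift X) (fun x i => (starCA^[q] x) (i + p)) :=
  stmt17_general X hX hinf ht p q hcop

end Paper
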